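/- arXiv:2210.17147 — 2 statements merged into one kernel-verified Lean document; each statement's English description precedes it below -/
import Mathlib

section
/- For the odd cycle C_{2n+1} with n ≥ 1, the set of cardinalities of vertex subsets inducing perfectly matchable subgraphs is exactly {0, 2, 4, …, 2n}. -/
/-! The edges of a matching cover their vertices two at a time, so a matchable set has even
size, hence at most `2n` vertices of `C_{2n+1}`. Conversely, the first `2m` vertices are matched
by consecutive pairs along the Hamiltonian path of the cycle. -/

/-- `S` induces a perfectly matchable subgraph of `G`. -/
def matchableSet {V : Type*} (G : SimpleGraph V) (S : Set V) : Prop :=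
  ∃ M : Set (Sym2 V), M ⊆ G.edgeSet ∧
    (M.Pairwise fun e f => ∀ v, ¬(v ∈ e ∧ v ∈ f)) ∧
    ∀ v, v ∈ S ↔ ∃ e ∈ M, v ∈ e

namespace matchableSet

variable {V : Type*} {G H : SimpleGraph V} {S : Set V}

theorem mono (hGH : G ≤ H) (hS : matchableSet G S) : matchableSet H S :=
  let ⟨M, hE, hP, hcover⟩ := hS
  ⟨M, hE.trans (SimpleGraph.edgeSet_mono hGH), hP, hcover⟩

theorem empty : matchableSet G ∅ :=
  ⟨∅, Set.empty_subset _, Set.pairwise_empty _, by simp⟩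

theorem insert_insert {a b : V} (hab : G.Adj a b) (ha : a ∉ S) (hb : b ∉ S)
    (hS : matchableSet G S) : matchableSet G (insert a (insert b S)) := by
  obtain ⟨M, hE, hP, hcover⟩ := hS
  have hfresh : ∀ e ∈ M, ∀ v ∈ s(a, b), v ∉ e := by
    rintro e he v hv hve
    rcases Sym2.mem_iff.mp hv with rfl | rfl
    exacts [ha ((hcover v).mpr ⟨e, he, hve⟩), hb ((hcover v).mpr ⟨e, he, hve⟩)]
  refine ⟨insert s(a, b) M, Set.insert_subset hab hE, ?_, fun v => ?_⟩
  · refine hP.insert fun e he _ => ⟨fun v hv => hfresh e he v hv.1 hv.2,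
      fun v hv => hfresh e he v hv.2 hv.1⟩
  · simp [hcover, or_assoc]

theorem even_ncard [Finite V] (hS : matchableSet G S) : Even S.ncard := by
  classical
  obtain ⟨M, hE, hP, hcover⟩ := hS
  have hSeq : S = ↑((Set.toFinite M).toFinset.biUnion Sym2.toFinset) := by
    ext v
    simp [hcover]
  rw [hSeq, Set.ncard_coe_finset, Finset.card_biUnion]
  · refine Finset.even_sum _ fun e he => ?_
    rw [Sym2.card_toFinset_of_not_isDiag e
      (G.not_isDiag_of_mem_edgeSet (hE ((Set.toFinite M).mem_toFinset.mp he)))]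
    exact even_two
  · intro e he f hf hef
    exact Finset.disjoint_left.mpr fun v hve hvf =>
      hP (by simpa using he) (by simpa using hf) hef v ⟨by simpa using hve, by simpa using hvf⟩

end matchableSet

open SimpleGraph

theorem Fin.ncard_setOf_val_lt (N m : ℕ) : {v : Fin N | v.val < m}.ncard = min N m := by
  classical
  rw [Set.ncard_eq_toFinset_card', Set.toFinset_ofPred]
  exact Fin.card_filter_val_lt

theorem matchableSet_pathGraph_setOf_val_lt {N m : ℕ} (h : 2 * m ≤ N) :
    matchableSet (pathGraph N) {v : Fin N | v.val < 2 * m} := by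
  induction m with
  | zero => simpa using matchableSet.empty
  | succ m ih =>
    have hset : {v : Fin N | v.val < 2 * (m + 1)} =
        insert ⟨2 * m, by omega⟩ (insert ⟨2 * m + 1, by omega⟩ {v | v.val < 2 * m}) := by
      ext v
      simp only [Set.mem_ofPred_eq, Set.mem_insert_iff, Fin.ext_iff]
      omega
    rw [hset]
    exact (ih (by omega)).insert_insert (pathGraph_adj.mpr (Or.inl rfl)) (by simp) (by simp)

theorem oddCycle_pms_cardinalities_general (n : ℕ) :
    {k : ℕ | ∃ S : Set (Fin (2 * n + 1)),
        matchableSet (SimpleGraph.cycleGraph (2 * n + 1)) S ∧ S.ncard = k} =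
      {k : ℕ | Even k ∧ k ≤ 2 * n} := by
  ext k
  constructor
  · rintro ⟨S, hS, rfl⟩
    have hle : S.ncard ≤ 2 * n + 1 := by
      simpa using Set.ncard_le_card S
    obtain ⟨r, hr⟩ := hS.even_ncard
    exact ⟨⟨r, hr⟩, by omega⟩
  · rintro ⟨⟨m, rfl⟩, hk⟩
    refine ⟨_, (matchableSet_pathGraph_setOf_val_lt (by omega : 2 * m ≤ 2 * n + 1)).mono
      pathGraph_le_cycleGraph, ?_⟩
    rw [Fin.ncard_setOf_val_lt]
    omega

/-- For the odd cycle `C_{2n+1}` with `n ≥ 1`, the cardinalities of vertex subsets inducing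
perfectly matchable subgraphs are exactly `{0, 2, 4, …, 2n}`. -/
theorem oddCycle_pms_cardinalities (n : ℕ) (hn : 1 ≤ n) :
    {k : ℕ | ∃ S : Set (Fin (2 * n + 1)),
        matchableSet (SimpleGraph.cycleGraph (2 * n + 1)) S ∧ S.ncard = k} =
      {k : ℕ | Even k ∧ k ≤ 2 * n} :=
  oddCycle_pms_cardinalities_general n
end

section
/- Let P ⊆ P' ⊆ ℝⁿ be lattice polytopes with P ∩ ℤⁿ = {a₁,…,a_m}, and suppose every lattice point of P' is a nonnegative integer combination of a₁,…,a_m. Suppose there exists w ∈ ℝⁿ with aᵢ · w = 1 for all i. If P' is normal, then P is normal. -/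
/-
A point `x` of `kP ∩ L_P` also lies in `kP' ∩ L_{P'}`, so normality of `P'` writes it as a sum of
`k` lattice points of `P'`, each of which is a nonnegative integer combination of the `aᵢ`; hence
`x = ∑ dᵢ aᵢ` with `dᵢ ∈ ℕ`. The linear form `· ⬝ᵥ w` is `1` on the lattice points of `P`, hence on
their convex hull `P`, so it is `k` on `x` and `∑ dᵢ` on `∑ dᵢ aᵢ`. Thus `∑ dᵢ = k`, and `x` is a sum
of `k` lattice points of `P`.
-/

open Pointwise Matrix
/-- A point of `ℝⁿ` with integer coordinates. -/
def IsLatticePoint {n : ℕ} (x : Fin n → ℝ) : Prop := ∀ i, ∃ z : ℤ, x i = (z : ℝ)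

/-- The sublattice of `ℤⁿ` (as an additive subgroup of `ℝⁿ`) generated by the lattice points
of `P`. -/
def latticeSpan {n : ℕ} (P : Set (Fin n → ℝ)) : AddSubgroup (Fin n → ℝ) :=
  AddSubgroup.closure {x ∈ P | IsLatticePoint x}

/-- `P` is normal: every point of `kP ∩ L_P` is a sum of `k` lattice points of `P`. -/
def IsNormalPolytope {n : ℕ} (P : Set (Fin n → ℝ)) : Prop :=
  ∀ k : ℕ, 0 < k → ∀ x, x ∈ (k : ℝ) • P → x ∈ latticeSpan P →
    ∃ f : Fin k → (Fin n → ℝ), (∀ i, f i ∈ P ∧ IsLatticePoint (f i)) ∧ x = ∑ i, f i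

lemma latticeSpan_mono {n : ℕ} {P Q : Set (Fin n → ℝ)} (h : P ⊆ Q) :
    latticeSpan P ≤ latticeSpan Q :=
  AddSubgroup.closure_mono fun _ hx => ⟨h hx.1, hx.2⟩

lemma dotProduct_eq_of_mem_convexHull {ι : Type*} [Fintype ι] {s : Set (ι → ℝ)} {w : ι → ℝ}
    {r : ℝ} (hs : ∀ y ∈ s, y ⬝ᵥ w = r) {p : ι → ℝ} (hp : p ∈ convexHull ℝ s) : p ⬝ᵥ w = r :=
  convexHull_min hs (convex_hyperplane ((dotProductBilin ℝ ℝ).flip w).isLinear r) hp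

lemma sum_eq_of_dotProduct_sum_nsmul {ι κ : Type*} [Fintype ι] [Fintype κ] {a : κ → ι → ℝ}
    {w : ι → ℝ} (hw : ∀ j, a j ⬝ᵥ w = 1) {d : κ → ℕ} {k : ℕ}
    (h : (∑ j, d j • a j) ⬝ᵥ w = k) : ∑ j, d j = k := by
  simp only [sum_dotProduct, ← Nat.cast_smul_eq_nsmul ℝ, smul_dotProduct, hw, smul_eq_mul,
    mul_one] at h
  exact_mod_cast h

lemma exists_fin_sum_eq_sum_nsmul {M : Type*} [AddCommMonoid M] {m k : ℕ} (a : Fin m → M)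
    (d : Fin m → ℕ) (hd : ∑ j, d j = k) :
    ∃ f : Fin k → M, (∀ i, f i ∈ Set.range a) ∧ ∑ i, f i = ∑ j, d j • a j := by
  subst hd
  refine ⟨fun i => a (finSigmaFinEquiv.symm i).1, fun i => ⟨_, rfl⟩, ?_⟩
  rw [← finSigmaFinEquiv.sum_comp, Fintype.sum_sigma]
  simp

theorem normal_of_subpolytope_general {n m : ℕ} (P P' : Set (Fin n → ℝ))
    (hPpoly : ∃ s : Finset (Fin n → ℝ), (∀ x ∈ s, IsLatticePoint x) ∧
      P = convexHull ℝ (s : Set (Fin n → ℝ)))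
    (hsub : P ⊆ P')
    (a : Fin m → (Fin n → ℝ))
    (ha : {x ∈ P | IsLatticePoint x} = Set.range a)
    (hcomb : ∀ x ∈ P', IsLatticePoint x → ∃ c : Fin m → ℕ, x = ∑ i, (c i : ℝ) • a i)
    (w : Fin n → ℝ) (hw : ∀ i, a i ⬝ᵥ w = 1)
    (hP' : IsNormalPolytope P') :
    IsNormalPolytope P := by
  rintro k hk x ⟨p, hp, hpx⟩ hL
  obtain ⟨g, hg, hxg⟩ := hP' k hk x ⟨p, hsub hp, hpx⟩ (latticeSpan_mono hsub hL)
  have hx_mem : x ∈ AddSubmonoid.closure (Set.range a) := by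
    refine hxg ▸ sum_mem fun i _ => ?_
    obtain ⟨c, hc⟩ := hcomb (g i) (hg i).1 (hg i).2
    simp only [Nat.cast_smul_eq_nsmul] at hc
    exact AddSubmonoid.mem_closure_range_iff_of_fintype.2 ⟨c, hc⟩
  obtain ⟨d, hd⟩ := AddSubmonoid.mem_closure_range_iff_of_fintype.1 hx_mem
  have hpw : p ⬝ᵥ w = 1 := by
    obtain ⟨s, hs, rfl⟩ := hPpoly
    refine dotProduct_eq_of_mem_convexHull (fun y hy => ?_) hp
    obtain ⟨j, rfl⟩ : y ∈ Set.range a := ha ▸ ⟨subset_convexHull ℝ _ hy, hs y hy⟩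
    exact hw j
  have hdk : ∑ j, d j = k := sum_eq_of_dotProduct_sum_nsmul hw <| by
    rw [← hd, ← hpx, smul_dotProduct, hpw, smul_eq_mul, mul_one]
  obtain ⟨f, hfa, hf⟩ := exists_fin_sum_eq_sum_nsmul a d hdk
  refine ⟨f, fun i => ?_, hf ▸ hd⟩
  obtain ⟨j, hj⟩ := hfa i
  exact hj ▸ ha.symm.subset ⟨j, rfl⟩

/-- If `P ⊆ P'` are lattice polytopes, every lattice point of `P'` is a nonnegative integer
combination of the lattice points `a₁, …, a_m` of `P`, and there is `w` with `aᵢ · w = 1` for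
all `i`, then normality of `P'` implies normality of `P`. -/
theorem normal_of_subpolytope {n m : ℕ} (P P' : Set (Fin n → ℝ))
    (hPpoly : ∃ s : Finset (Fin n → ℝ), (∀ x ∈ s, IsLatticePoint x) ∧
      P = convexHull ℝ (s : Set (Fin n → ℝ)))
    (hP'poly : ∃ s : Finset (Fin n → ℝ), (∀ x ∈ s, IsLatticePoint x) ∧
      P' = convexHull ℝ (s : Set (Fin n → ℝ)))
    (hsub : P ⊆ P')
    (a : Fin m → (Fin n → ℝ))
    (ha : {x ∈ P | IsLatticePoint x} = Set.range a)
    (hcomb : ∀ x ∈ P', IsLatticePoint x → ∃ c : Fin m → ℕ, x = ∑ i, (c i : ℝ) • a i)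
    (w : Fin n → ℝ) (hw : ∀ i, a i ⬝ᵥ w = 1)
    (hP' : IsNormalPolytope P') :
    IsNormalPolytope P :=
  normal_of_subpolytope_general P P' hPpoly hsub a ha hcomb w hw hP'
end
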